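/- (Borisenko's theorem, in local coordinates.) Let U ⊆ ℝ² be open, let r : U → ℝ³ be a smooth conformal harmonic immersion (r_uu + r_vv = 0, ⟨r_u,r_v⟩ = 0, ‖r_u‖ = ‖r_v‖ ≠ 0, so r parametrizes a minimal surface M), and let ρ : U → ℝ be harmonic: ρ_uu + ρ_vv = 0. Define the unit normal n = (r_u × r_v)/‖r_u × r_v‖ and the tangent field τ = (ρ_u·r_v − ρ_v·r_u)/‖r_u × r_v‖, and let H : U × ℝ → ℂ³ = ℝ³ ⊕ iℝ³ be given by H(u, v, t) = r(u,v) + i·( τ(u,v) × n(u,v) + t·n(u,v) ), a parametrization of the submanifold N = {(p, τ(p)×n(p) + t n(p)) : p ∈ M, t ∈ ℝ}. Then N is special Lagrangian: at every point of U × ℝ, (i) the standard symplectic form ω((x,y),(x',y')) = ⟨x,y'⟩ − ⟨x',y⟩ vanishes on every pair of partial derivatives of H, and (ii) Re( Ω(∂H/∂u, ∂H/∂v, ∂H/∂t) ) = 0, where Ω is the determinant 3-form on ℂ³. -/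

import Mathlib

/-- Partial derivative in the first variable of a map `ℝ² → ℝ³`. -/
noncomputable def Du (f : ℝ × ℝ → Fin 3 → ℝ) (p : ℝ × ℝ) : Fin 3 → ℝ :=
  fun i => deriv (fun s => f (s, p.2) i) p.1

/-- Partial derivative in the second variable of a map `ℝ² → ℝ³`. -/
noncomputable def Dv (f : ℝ × ℝ → Fin 3 → ℝ) (p : ℝ × ℝ) : Fin 3 → ℝ :=
  fun i => deriv (fun s => f (p.1, s) i) p.2

/-- Partial derivative in the first variable of a scalar function on `ℝ²`. -/
noncomputable def Dus (f : ℝ × ℝ → ℝ) (p : ℝ × ℝ) : ℝ := deriv (fun s => f (s, p.2)) p.1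

/-- Partial derivative in the second variable of a scalar function on `ℝ²`. -/
noncomputable def Dvs (f : ℝ × ℝ → ℝ) (p : ℝ × ℝ) : ℝ := deriv (fun s => f (p.1, s)) p.2

/-- The Euclidean inner product on `ℝ³`. -/
def dot3 (a b : Fin 3 → ℝ) : ℝ := a 0 * b 0 + a 1 * b 1 + a 2 * b 2

/-- The Euclidean norm on `ℝ³`. -/
noncomputable def norm3 (a : Fin 3 → ℝ) : ℝ := Real.sqrt (dot3 a a)

/-- The unit normal `n = (r_u × r_v)/‖r_u × r_v‖` of a parametrized surface. -/
noncomputable def nvec (r : ℝ × ℝ → Fin 3 → ℝ) (p : ℝ × ℝ) : Fin 3 → ℝ :=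
  (norm3 (crossProduct (Du r p) (Dv r p)))⁻¹ • crossProduct (Du r p) (Dv r p)

/-- The tangent field `τ = (ρ_u·r_v − ρ_v·r_u)/‖r_u × r_v‖`. -/
noncomputable def tanvec (r : ℝ × ℝ → Fin 3 → ℝ) (ρ : ℝ × ℝ → ℝ) (p : ℝ × ℝ) :
    Fin 3 → ℝ :=
  (norm3 (crossProduct (Du r p) (Dv r p)))⁻¹ • (Dus ρ p • Dv r p - Dvs ρ p • Du r p)

/-- Borisenko's parametrization `H(u,v,t) = (r(u,v), τ×n + t·n)` of
`N = {(p, τ(p)×n(p) + t n(p)) : p ∈ M, t ∈ ℝ}` in `ℝ³ ⊕ ℝ³ ≅ ℂ³`. -/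
noncomputable def bor (r : ℝ × ℝ → Fin 3 → ℝ) (ρ : ℝ × ℝ → ℝ) (p : ℝ × ℝ) (t : ℝ) :
    (Fin 3 → ℝ) × (Fin 3 → ℝ) :=
  (r p, crossProduct (tanvec r ρ p) (nvec r p) + t • nvec r p)

/-- `∂H/∂u`. -/
noncomputable def boru (r : ℝ × ℝ → Fin 3 → ℝ) (ρ : ℝ × ℝ → ℝ) (p : ℝ × ℝ) (t : ℝ) :
    (Fin 3 → ℝ) × (Fin 3 → ℝ) :=
  (fun i => deriv (fun s => (bor r ρ (s, p.2) t).1 i) p.1,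
   fun i => deriv (fun s => (bor r ρ (s, p.2) t).2 i) p.1)

/-- `∂H/∂v`. -/
noncomputable def borv (r : ℝ × ℝ → Fin 3 → ℝ) (ρ : ℝ × ℝ → ℝ) (p : ℝ × ℝ) (t : ℝ) :
    (Fin 3 → ℝ) × (Fin 3 → ℝ) :=
  (fun i => deriv (fun s => (bor r ρ (p.1, s) t).1 i) p.2,
   fun i => deriv (fun s => (bor r ρ (p.1, s) t).2 i) p.2)

/-- `∂H/∂t`. -/
noncomputable def bort (r : ℝ × ℝ → Fin 3 → ℝ) (ρ : ℝ × ℝ → ℝ) (p : ℝ × ℝ) (t : ℝ) :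
    (Fin 3 → ℝ) × (Fin 3 → ℝ) :=
  (fun i => deriv (fun s => (bor r ρ p s).1 i) t,
   fun i => deriv (fun s => (bor r ρ p s).2 i) t)

/-- The standard symplectic form `ω((x,y),(x',y')) = ⟨x,y'⟩ − ⟨x',y⟩` on `ℝ³ ⊕ ℝ³`. -/
def symp (X Y : (Fin 3 → ℝ) × (Fin 3 → ℝ)) : ℝ := dot3 X.1 Y.2 - dot3 Y.1 X.2

/-- A pair `(x, y) ∈ ℝ³ ⊕ ℝ³` viewed as the vector `x + iy ∈ ℂ³`. -/
noncomputable def toC (X : (Fin 3 → ℝ) × (Fin 3 → ℝ)) : Fin 3 → ℂ :=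
  fun i => (X.1 i : ℂ) + (X.2 i : ℂ) * Complex.I

/-- The determinant `3`-form `Ω = dz₁∧dz₂∧dz₃` on `ℂ³` (columns `v 0, v 1, v 2`). -/
noncomputable def detForm3 (v : Fin 3 → Fin 3 → ℂ) : ℂ :=
  Matrix.det (Matrix.of fun i j => v j i)


section BorisenkoAux

open Matrix

/-! ### Algebraic lemmas about `dot3` and `crossProduct` -/

lemma dot3_add_right (x y z : Fin 3 → ℝ) : dot3 x (y + z) = dot3 x y + dot3 x z := by
  simp [dot3]; ring

lemma dot3_sub_right (x y z : Fin 3 → ℝ) : dot3 x (y - z) = dot3 x y - dot3 x z := by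
  simp [dot3]; ring

lemma dot3_smul_right (c : ℝ) (x y : Fin 3 → ℝ) : dot3 x (c • y) = c * dot3 x y := by
  simp [dot3]; ring

lemma dot3_smul_left (c : ℝ) (x y : Fin 3 → ℝ) : dot3 (c • x) y = c * dot3 x y := by
  simp [dot3]; ring

lemma dot3_add_left (x y z : Fin 3 → ℝ) : dot3 (x + y) z = dot3 x z + dot3 y z := by
  simp [dot3]; ring

lemma dot3_zero_left (y : Fin 3 → ℝ) : dot3 0 y = 0 := by simp [dot3]

lemma dot3_comm' (x y : Fin 3 → ℝ) : dot3 x y = dot3 y x := by simp [dot3]; ring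

lemma dot3_zero_left' (y : Fin 3 → ℝ) : dot3 (fun _ => (0:ℝ)) y = 0 := by simp [dot3]

lemma dot3_cross_left (x y : Fin 3 → ℝ) : dot3 x (crossProduct x y) = 0 := by
  simp [dot3, cross_apply]; ring

lemma dot3_cross_right (x y : Fin 3 → ℝ) : dot3 y (crossProduct x y) = 0 := by
  simp [dot3, cross_apply]; ring

lemma dot3_cross_cross' (u v w x : Fin 3 → ℝ) :
    dot3 (crossProduct u v) (crossProduct w x)
      = dot3 u w * dot3 v x - dot3 u x * dot3 v w := by
  simp [dot3, cross_apply]; ring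

lemma cross_smul_left' (c : ℝ) (x y : Fin 3 → ℝ) :
    crossProduct (c • x) y = c • crossProduct x y := by
  ext i; fin_cases i <;> simp [cross_apply] <;> ring

lemma cross_smul_right' (c : ℝ) (x y : Fin 3 → ℝ) :
    crossProduct x (c • y) = c • crossProduct x y := by
  ext i; fin_cases i <;> simp [cross_apply] <;> ring

lemma cross_sub_left' (x y z : Fin 3 → ℝ) :
    crossProduct (x - y) z = crossProduct x z - crossProduct y z := by
  ext i; fin_cases i <;> simp [cross_apply] <;> ring

lemma dot3_triple (u v w : Fin 3 → ℝ) :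
    dot3 u (crossProduct v w) = dot3 v (crossProduct w u) := by
  simp [dot3, cross_apply]; ring

lemma dot3_self_nonneg (a : Fin 3 → ℝ) : 0 ≤ dot3 a a := by
  simp only [dot3]; nlinarith [sq_nonneg (a 0), sq_nonneg (a 1), sq_nonneg (a 2)]

lemma dot3_self_eq_of_norm3 {a b : Fin 3 → ℝ} (h : norm3 a = norm3 b) :
    dot3 a a = dot3 b b := by
  rw [← Real.sq_sqrt (dot3_self_nonneg a), ← Real.sq_sqrt (dot3_self_nonneg b)]
  rw [norm3] at h; rw [norm3] at h; rw [h]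

lemma dot3_self_ne_of_norm3 {a : Fin 3 → ℝ} (h : norm3 a ≠ 0) : dot3 a a ≠ 0 := by
  intro h0; apply h; rw [norm3, h0, Real.sqrt_zero]

lemma norm3_cross {A B : Fin 3 → ℝ} (hab : dot3 A B = 0) (hbb : dot3 B B = dot3 A A) :
    norm3 (crossProduct A B) = dot3 A A := by
  have hba : dot3 B A = 0 := by simpa [dot3, mul_comm] using hab
  rw [norm3, dot3_cross_cross', hab, hba, hbb]
  rw [show dot3 A A * dot3 A A - 0 * 0 = (dot3 A A)^2 by ring]
  exact Real.sqrt_sq (dot3_self_nonneg A)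

lemma detre (X Y Z : (Fin 3 → ℝ) × (Fin 3 → ℝ)) :
    (detForm3 ![toC X, toC Y, toC Z]).re =
      dot3 Z.1 (crossProduct X.1 Y.1) - dot3 Z.1 (crossProduct X.2 Y.2)
      - dot3 Z.2 (crossProduct X.2 Y.1) - dot3 Z.2 (crossProduct X.1 Y.2) := by
  simp [detForm3, toC, Matrix.det_fin_three, dot3, cross_apply, Complex.add_re, Complex.mul_re,
    Complex.sub_re, Complex.add_im, Complex.mul_im, Complex.sub_im]
  ring

lemma shat_dot1 (A B : Fin 3 → ℝ) (a b t : ℝ) (hab : dot3 A B = 0)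
    (hbb : dot3 B B = dot3 A A) (h0 : dot3 A A ≠ 0) :
    dot3 A (crossProduct ((dot3 A A)⁻¹ • (a • B - b • A)) ((dot3 A A)⁻¹ • crossProduct A B)
      + t • ((dot3 A A)⁻¹ • crossProduct A B)) = a := by
  set C := crossProduct A B with hC
  rw [dot3_add_right, dot3_smul_right, dot3_smul_right, dot3_cross_left, cross_smul_left',
    cross_smul_right', dot3_smul_right, dot3_smul_right, cross_sub_left', cross_smul_left',
    cross_smul_left', dot3_sub_right, dot3_smul_right, dot3_smul_right]
  have h1 : dot3 A (crossProduct B C) = dot3 C C := by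
    rw [dot3_triple A B C, dot3_triple B C A]
  have h2 : dot3 A (crossProduct A C) = 0 := dot3_cross_left A C
  have h3 : dot3 C C = dot3 A A * dot3 A A := by
    rw [hC, dot3_cross_cross', hab, hbb]
    have hba : dot3 B A = 0 := by simpa [dot3, mul_comm] using hab
    rw [hba]; ring
  rw [h1, h2, h3]
  field_simp
  ring

lemma shat_dot2 (A B : Fin 3 → ℝ) (a b t : ℝ) (hab : dot3 A B = 0)
    (hbb : dot3 B B = dot3 A A) (h0 : dot3 A A ≠ 0) :
    dot3 B (crossProduct ((dot3 A A)⁻¹ • (a • B - b • A)) ((dot3 A A)⁻¹ • crossProduct A B)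
      + t • ((dot3 A A)⁻¹ • crossProduct A B)) = b := by
  set C := crossProduct A B with hC
  rw [dot3_add_right, dot3_smul_right, dot3_smul_right, dot3_cross_right, cross_smul_left',
    cross_smul_right', dot3_smul_right, dot3_smul_right, cross_sub_left', cross_smul_left',
    cross_smul_left', dot3_sub_right, dot3_smul_right, dot3_smul_right]
  have h1 : dot3 B (crossProduct B C) = 0 := dot3_cross_left B C
  have h2 : dot3 B (crossProduct A C) = - dot3 C C := by
    rw [dot3_triple B A C]
    have hcb : crossProduct C B = - crossProduct B C := by
      ext i; fin_cases i <;> simp [cross_apply] <;> ring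
    rw [hcb]
    have hneg : dot3 A (-(crossProduct B C)) = - dot3 A (crossProduct B C) := by
      simp [dot3]; ring
    rw [hneg, dot3_triple A B C, dot3_triple B C A]
  have h3 : dot3 C C = dot3 A A * dot3 A A := by
    rw [hC, dot3_cross_cross', hab, hbb]
    have hba : dot3 B A = 0 := by simpa [dot3, mul_comm] using hab
    rw [hba]; ring
  rw [h1, h2, h3]
  field_simp
  ring

/-! ### Calculus lemmas -/

noncomputable def D1 (f : ℝ × ℝ → Fin 3 → ℝ) (q : ℝ × ℝ) : Fin 3 → ℝ :=
  fderiv ℝ f q (1, 0)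
noncomputable def D2 (f : ℝ × ℝ → Fin 3 → ℝ) (q : ℝ × ℝ) : Fin 3 → ℝ :=
  fderiv ℝ f q (0, 1)
noncomputable def d1 (f : ℝ × ℝ → ℝ) (q : ℝ × ℝ) : ℝ := fderiv ℝ f q (1, 0)
noncomputable def d2 (f : ℝ × ℝ → ℝ) (q : ℝ × ℝ) : ℝ := fderiv ℝ f q (0, 1)

noncomputable def Shat (r : ℝ × ℝ → Fin 3 → ℝ) (ρ : ℝ × ℝ → ℝ) (t : ℝ) (q : ℝ × ℝ) :
    Fin 3 → ℝ :=
  crossProduct ((dot3 (D1 r q) (D1 r q))⁻¹ • (d1 ρ q • D2 r q - d2 ρ q • D1 r q))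
      ((dot3 (D1 r q) (D1 r q))⁻¹ • crossProduct (D1 r q) (D2 r q))
    + t • ((dot3 (D1 r q) (D1 r q))⁻¹ • crossProduct (D1 r q) (D2 r q))

variable {E : Type*} [NormedAddCommGroup E] [NormedSpace ℝ E]

lemma hasDerivAt_fst' {f : ℝ × ℝ → E} {u v : ℝ} (hf : DifferentiableAt ℝ f (u, v)) :
    HasDerivAt (fun s => f (s, v)) (fderiv ℝ f (u, v) (1, 0)) u := by
  have h1 : HasDerivAt (fun s : ℝ => ((s, v) : ℝ × ℝ)) ((1 : ℝ), (0 : ℝ)) u :=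
    (hasDerivAt_id u).prodMk (hasDerivAt_const u v)
  exact hf.hasFDerivAt.comp_hasDerivAt u h1

lemma hasDerivAt_snd' {f : ℝ × ℝ → E} {u v : ℝ} (hf : DifferentiableAt ℝ f (u, v)) :
    HasDerivAt (fun s => f (u, s)) (fderiv ℝ f (u, v) (0, 1)) v := by
  have h1 : HasDerivAt (fun s : ℝ => ((u, s) : ℝ × ℝ)) ((0 : ℝ), (1 : ℝ)) v :=
    (hasDerivAt_const v u).prodMk (hasDerivAt_id v)
  exact hf.hasFDerivAt.comp_hasDerivAt v h1

lemma diffAt_line_fst {f : ℝ × ℝ → E} {u v : ℝ} (hf : DifferentiableAt ℝ f (u, v)) :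
    DifferentiableAt ℝ (fun s => f (s, v)) u := (hasDerivAt_fst' hf).differentiableAt

lemma diffAt_line_snd {f : ℝ × ℝ → E} {u v : ℝ} (hf : DifferentiableAt ℝ f (u, v)) :
    DifferentiableAt ℝ (fun s => f (u, s)) v := (hasDerivAt_snd' hf).differentiableAt

lemma hasDerivAt_dot3_fst {F G : ℝ × ℝ → Fin 3 → ℝ} {u v : ℝ}
    (hF : DifferentiableAt ℝ F (u, v)) (hG : DifferentiableAt ℝ G (u, v)) :
    HasDerivAt (fun s => dot3 (F (s, v)) (G (s, v)))
      (dot3 (fun i => deriv (fun s => F (s, v) i) u) (G (u, v))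
        + dot3 (F (u, v)) (fun i => deriv (fun s => G (s, v) i) u)) u := by
  have hFl := diffAt_line_fst hF
  have hGl := diffAt_line_fst hG
  have hFi : ∀ i, HasDerivAt (fun s => F (s, v) i) (deriv (fun s => F (s, v) i) u) u :=
    fun i => (differentiableAt_pi.mp hFl i).hasDerivAt
  have hGi : ∀ i, HasDerivAt (fun s => G (s, v) i) (deriv (fun s => G (s, v) i) u) u :=
    fun i => (differentiableAt_pi.mp hGl i).hasDerivAt
  have h := (((hFi 0).mul (hGi 0)).add ((hFi 1).mul (hGi 1))).add ((hFi 2).mul (hGi 2))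
  refine (h.congr_of_eventuallyEq (Filter.Eventually.of_forall fun s => rfl)).congr_deriv ?_
  simp [dot3]; ring

lemma hasDerivAt_dot3_snd {F G : ℝ × ℝ → Fin 3 → ℝ} {u v : ℝ}
    (hF : DifferentiableAt ℝ F (u, v)) (hG : DifferentiableAt ℝ G (u, v)) :
    HasDerivAt (fun s => dot3 (F (u, s)) (G (u, s)))
      (dot3 (fun i => deriv (fun s => F (u, s) i) v) (G (u, v))
        + dot3 (F (u, v)) (fun i => deriv (fun s => G (u, s) i) v)) v := by
  have hFl := diffAt_line_snd hF
  have hGl := diffAt_line_snd hG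
  have hFi : ∀ i, HasDerivAt (fun s => F (u, s) i) (deriv (fun s => F (u, s) i) v) v :=
    fun i => (differentiableAt_pi.mp hFl i).hasDerivAt
  have hGi : ∀ i, HasDerivAt (fun s => G (u, s) i) (deriv (fun s => G (u, s) i) v) v :=
    fun i => (differentiableAt_pi.mp hGl i).hasDerivAt
  have h := (((hFi 0).mul (hGi 0)).add ((hFi 1).mul (hGi 1))).add ((hFi 2).mul (hGi 2))
  refine (h.congr_of_eventuallyEq (Filter.Eventually.of_forall fun s => rfl)).congr_deriv ?_
  simp [dot3]; ring

lemma ev_line_fst {U : Set (ℝ × ℝ)} (hU : IsOpen U) {u v : ℝ} (h : (u, v) ∈ U) :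
    ∀ᶠ s in nhds u, (s, v) ∈ U :=
  (Continuous.continuousAt (by continuity)).preimage_mem_nhds (hU.mem_nhds h)

lemma ev_line_snd {U : Set (ℝ × ℝ)} (hU : IsOpen U) {u v : ℝ} (h : (u, v) ∈ U) :
    ∀ᶠ s in nhds v, (u, s) ∈ U :=
  (Continuous.continuousAt (by continuity)).preimage_mem_nhds (hU.mem_nhds h)

lemma deriv_congr_fst {U : Set (ℝ × ℝ)} (hU : IsOpen U) {u v : ℝ} (h : (u, v) ∈ U)
    {f g : ℝ × ℝ → ℝ} (hfg : ∀ q ∈ U, f q = g q) :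
    deriv (fun s => f (s, v)) u = deriv (fun s => g (s, v)) u :=
  Filter.EventuallyEq.deriv_eq ((ev_line_fst hU h).mono fun s hs => hfg _ hs)

lemma deriv_congr_snd {U : Set (ℝ × ℝ)} (hU : IsOpen U) {u v : ℝ} (h : (u, v) ∈ U)
    {f g : ℝ × ℝ → ℝ} (hfg : ∀ q ∈ U, f q = g q) :
    deriv (fun s => f (u, s)) v = deriv (fun s => g (u, s)) v :=
  Filter.EventuallyEq.deriv_eq ((ev_line_snd hU h).mono fun s hs => hfg _ hs)

lemma diffAt_cross {f g : ℝ × ℝ → Fin 3 → ℝ} {x : ℝ × ℝ}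
    (hf : DifferentiableAt ℝ f x) (hg : DifferentiableAt ℝ g x) :
    DifferentiableAt ℝ (fun q => crossProduct (f q) (g q)) x := by
  have hfi := fun i => differentiableAt_pi.mp hf i
  have hgi := fun i => differentiableAt_pi.mp hg i
  rw [differentiableAt_pi]
  intro i
  fin_cases i <;> simp [cross_apply]
  · exact ((hfi 1).mul (hgi 2)).sub ((hfi 2).mul (hgi 1))
  · exact ((hfi 2).mul (hgi 0)).sub ((hfi 0).mul (hgi 2))
  · exact ((hfi 0).mul (hgi 1)).sub ((hfi 1).mul (hgi 0))

lemma diffAt_dot3 {f g : ℝ × ℝ → Fin 3 → ℝ} {x : ℝ × ℝ}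
    (hf : DifferentiableAt ℝ f x) (hg : DifferentiableAt ℝ g x) :
    DifferentiableAt ℝ (fun q => dot3 (f q) (g q)) x := by
  have hfi := fun i => differentiableAt_pi.mp hf i
  have hgi := fun i => differentiableAt_pi.mp hg i
  simp only [dot3]
  exact (((hfi 0).mul (hgi 0)).add ((hfi 1).mul (hgi 1))).add ((hfi 2).mul (hgi 2))

section smoothstuff
variable {U : Set (ℝ × ℝ)} {u v : ℝ}

lemma diffAt_fderiv {r : ℝ × ℝ → E} (hU : IsOpen U) (hs : ContDiffOn ℝ (⊤ : ℕ∞) r U)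
    (hp : (u, v) ∈ U) : DifferentiableAt ℝ (fderiv ℝ r) (u, v) :=
  ((hs.fderiv_of_isOpen hU (m := 1) (WithTop.coe_le_coe.mpr le_top)).differentiableOn (by simp)).differentiableAt
    (hU.mem_nhds hp)

lemma diffAt_D1 {r : ℝ × ℝ → Fin 3 → ℝ} (hU : IsOpen U) (hs : ContDiffOn ℝ (⊤ : ℕ∞) r U)
    (hp : (u, v) ∈ U) : DifferentiableAt ℝ (D1 r) (u, v) :=
  (diffAt_fderiv hU hs hp).clm_apply (differentiableAt_const _)

lemma diffAt_D2 {r : ℝ × ℝ → Fin 3 → ℝ} (hU : IsOpen U) (hs : ContDiffOn ℝ (⊤ : ℕ∞) r U)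
    (hp : (u, v) ∈ U) : DifferentiableAt ℝ (D2 r) (u, v) :=
  (diffAt_fderiv hU hs hp).clm_apply (differentiableAt_const _)

lemma diffAt_d1 {ρ : ℝ × ℝ → ℝ} (hU : IsOpen U) (hs : ContDiffOn ℝ (⊤ : ℕ∞) ρ U)
    (hp : (u, v) ∈ U) : DifferentiableAt ℝ (d1 ρ) (u, v) :=
  (diffAt_fderiv hU hs hp).clm_apply (differentiableAt_const _)

lemma diffAt_d2 {ρ : ℝ × ℝ → ℝ} (hU : IsOpen U) (hs : ContDiffOn ℝ (⊤ : ℕ∞) ρ U)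
    (hp : (u, v) ∈ U) : DifferentiableAt ℝ (d2 ρ) (u, v) :=
  (diffAt_fderiv hU hs hp).clm_apply (differentiableAt_const _)

lemma fderiv_apply_vec {r : ℝ × ℝ → E} (hU : IsOpen U) (hs : ContDiffOn ℝ (⊤ : ℕ∞) r U)
    (hp : (u, v) ∈ U) (w z : ℝ × ℝ) :
    fderiv ℝ (fun q => fderiv ℝ r q w) (u, v) z = fderiv ℝ (fderiv ℝ r) (u, v) z w := by
  rw [fderiv_clm_apply (diffAt_fderiv hU hs hp) (differentiableAt_const w)]
  simp

lemma clairaut_vec {r : ℝ × ℝ → Fin 3 → ℝ} (hU : IsOpen U) (hs : ContDiffOn ℝ (⊤ : ℕ∞) r U)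
    (hp : (u, v) ∈ U) (i : Fin 3) :
    deriv (fun s => D1 r (u, s) i) v = deriv (fun s => D2 r (s, v) i) u := by
  have hsym : IsSymmSndFDerivAt ℝ r (u, v) :=
    (hs.contDiffAt (hU.mem_nhds hp)).isSymmSndFDerivAt (by
      rw [minSmoothness_of_isRCLikeNormedField]; exact WithTop.coe_le_coe.mpr le_top)
  have h1 := (hasDerivAt_pi.mp (hasDerivAt_snd' (diffAt_D1 hU hs hp)) i).deriv
  have h2 := (hasDerivAt_pi.mp (hasDerivAt_fst' (diffAt_D2 hU hs hp)) i).deriv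
  rw [h1, h2]
  have e1' : (fderiv ℝ (D1 r) (u, v)) ((0:ℝ), (1:ℝ))
      = fderiv ℝ (fderiv ℝ r) (u, v) (0, 1) (1, 0) :=
    fderiv_apply_vec hU hs hp ((1:ℝ), (0:ℝ)) ((0:ℝ), (1:ℝ))
  have e2' : (fderiv ℝ (D2 r) (u, v)) ((1:ℝ), (0:ℝ))
      = fderiv ℝ (fderiv ℝ r) (u, v) (1, 0) (0, 1) :=
    fderiv_apply_vec hU hs hp ((0:ℝ), (1:ℝ)) ((1:ℝ), (0:ℝ))
  rw [e1', e2', hsym.eq]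

lemma clairaut_scal {ρ : ℝ × ℝ → ℝ} (hU : IsOpen U) (hs : ContDiffOn ℝ (⊤ : ℕ∞) ρ U)
    (hp : (u, v) ∈ U) :
    deriv (fun s => d1 ρ (u, s)) v = deriv (fun s => d2 ρ (s, v)) u := by
  have hsym : IsSymmSndFDerivAt ℝ ρ (u, v) :=
    (hs.contDiffAt (hU.mem_nhds hp)).isSymmSndFDerivAt (by
      rw [minSmoothness_of_isRCLikeNormedField]; exact WithTop.coe_le_coe.mpr le_top)
  have h1 := (hasDerivAt_snd' (diffAt_d1 hU hs hp)).deriv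
  have h2 := (hasDerivAt_fst' (diffAt_d2 hU hs hp)).deriv
  rw [h1, h2]
  have e1' : (fderiv ℝ (d1 ρ) (u, v)) ((0:ℝ), (1:ℝ))
      = fderiv ℝ (fderiv ℝ ρ) (u, v) (0, 1) (1, 0) :=
    fderiv_apply_vec hU hs hp ((1:ℝ), (0:ℝ)) ((0:ℝ), (1:ℝ))
  have e2' : (fderiv ℝ (d2 ρ) (u, v)) ((1:ℝ), (0:ℝ))
      = fderiv ℝ (fderiv ℝ ρ) (u, v) (1, 0) (0, 1) :=
    fderiv_apply_vec hU hs hp ((0:ℝ), (1:ℝ)) ((1:ℝ), (0:ℝ))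
  rw [e1', e2', hsym.eq]

end smoothstuff

end BorisenkoAux

/-- Borisenko's theorem in local coordinates: for a minimal surface `r` and a harmonic
function `ρ`, the submanifold `N = {(p, τ(p)×n(p) + t n(p))}` is special Lagrangian. -/
theorem stmt9 (U : Set (ℝ × ℝ)) (hU : IsOpen U) (r : ℝ × ℝ → Fin 3 → ℝ)
    (hsmooth : ContDiffOn ℝ (⊤ : ℕ∞) r U)
    (hharm : ∀ p ∈ U, Du (Du r) p + Dv (Dv r) p = 0)
    (hconf : ∀ p ∈ U, dot3 (Du r p) (Dv r p) = 0)
    (hiso : ∀ p ∈ U, norm3 (Du r p) = norm3 (Dv r p))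
    (hreg : ∀ p ∈ U, norm3 (Du r p) ≠ 0)
    (ρ : ℝ × ℝ → ℝ) (hρsmooth : ContDiffOn ℝ (⊤ : ℕ∞) ρ U)
    (hρharm : ∀ p ∈ U, Dus (Dus ρ) p + Dvs (Dvs ρ) p = 0) :
    ∀ p ∈ U, ∀ t : ℝ,
      (∀ X ∈ ({boru r ρ p t, borv r ρ p t, bort r ρ p t} :
          Set ((Fin 3 → ℝ) × (Fin 3 → ℝ))),
        ∀ Y ∈ ({boru r ρ p t, borv r ρ p t, bort r ρ p t} :
            Set ((Fin 3 → ℝ) × (Fin 3 → ℝ))),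
          symp X Y = 0) ∧
      (detForm3 ![toC (boru r ρ p t), toC (borv r ρ p t), toC (bort r ρ p t)]).re = 0 := by
  intro p hp t
  obtain ⟨u, v⟩ := p
  have hrdiff : ∀ q ∈ U, DifferentiableAt ℝ r q := fun q hq =>
    (hsmooth.contDiffAt (hU.mem_nhds hq)).differentiableAt (by simp)
  have hρdiff : ∀ q ∈ U, DifferentiableAt ℝ ρ q := fun q hq =>
    (hρsmooth.contDiffAt (hU.mem_nhds hq)).differentiableAt (by simp)
  have hDu_eq : ∀ q ∈ U, Du r q = D1 r q := fun q hq =>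
    funext fun i => (hasDerivAt_pi.mp (hasDerivAt_fst' (hrdiff q hq)) i).deriv
  have hDv_eq : ∀ q ∈ U, Dv r q = D2 r q := fun q hq =>
    funext fun i => (hasDerivAt_pi.mp (hasDerivAt_snd' (hrdiff q hq)) i).deriv
  have hdus_eq : ∀ q ∈ U, Dus ρ q = d1 ρ q := fun q hq =>
    (hasDerivAt_fst' (hρdiff q hq)).deriv
  have hdvs_eq : ∀ q ∈ U, Dvs ρ q = d2 ρ q := fun q hq =>
    (hasDerivAt_snd' (hρdiff q hq)).deriv
  have hcAB : ∀ q ∈ U, dot3 (D1 r q) (D2 r q) = 0 := fun q hq => by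
    rw [← hDu_eq q hq, ← hDv_eq q hq]; exact hconf q hq
  have hcBB : ∀ q ∈ U, dot3 (D2 r q) (D2 r q) = dot3 (D1 r q) (D1 r q) := fun q hq => by
    rw [← hDu_eq q hq, ← hDv_eq q hq]; exact dot3_self_eq_of_norm3 (hiso q hq).symm
  have hL2 : ∀ q ∈ U, dot3 (D1 r q) (D1 r q) ≠ 0 := fun q hq => by
    rw [← hDu_eq q hq]; exact dot3_self_ne_of_norm3 (hreg q hq)
  have hnrm : ∀ q ∈ U, norm3 (crossProduct (Du r q) (Dv r q)) = dot3 (D1 r q) (D1 r q) :=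
    fun q hq => by
      rw [hDu_eq q hq, hDv_eq q hq]; exact norm3_cross (hcAB q hq) (hcBB q hq)
  have hSeq : ∀ q ∈ U, (bor r ρ q t).2 = Shat r ρ t q := fun q hq => by
    show crossProduct (tanvec r ρ q) (nvec r q) + t • nvec r q = _
    simp only [tanvec, nvec, Shat]
    rw [hnrm q hq, hDu_eq q hq, hDv_eq q hq, hdus_eq q hq, hdvs_eq q hq]
  have hphi : ∀ q ∈ U, dot3 (D1 r q) (Shat r ρ t q) = d1 ρ q := fun q hq => by
    simp only [Shat]
    exact shat_dot1 _ _ _ _ _ (hcAB q hq) (hcBB q hq) (hL2 q hq)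
  have hpsi : ∀ q ∈ U, dot3 (D2 r q) (Shat r ρ t q) = d2 ρ q := fun q hq => by
    simp only [Shat]
    exact shat_dot2 _ _ _ _ _ (hcAB q hq) (hcBB q hq) (hL2 q hq)
  have hA := diffAt_D1 hU hsmooth hp
  have hB := diffAt_D2 hU hsmooth hp
  have ha := diffAt_d1 hU hρsmooth hp
  have hb := diffAt_d2 hU hρsmooth hp
  have hL2d : DifferentiableAt ℝ (fun q => (dot3 (D1 r q) (D1 r q))⁻¹) (u, v) :=
    (diffAt_dot3 hA hA).inv (hL2 _ hp)
  have hNd : DifferentiableAt ℝ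
      (fun q => (dot3 (D1 r q) (D1 r q))⁻¹ • crossProduct (D1 r q) (D2 r q)) (u, v) :=
    hL2d.smul (diffAt_cross hA hB)
  have hTd : DifferentiableAt ℝ
      (fun q => (dot3 (D1 r q) (D1 r q))⁻¹ • (d1 ρ q • D2 r q - d2 ρ q • D1 r q)) (u, v) :=
    hL2d.smul ((ha.smul hB).sub (hb.smul hA))
  have hSd : DifferentiableAt ℝ (Shat r ρ t) (u, v) := by
    have h := (diffAt_cross hTd hNd).add ((differentiableAt_const t).smul hNd)
    exact h
  -- the four product-rule identities
  have E1 : Dvs (Dus ρ) (u, v)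
      = dot3 (fun i => deriv (fun s => D1 r (u, s) i) v) (Shat r ρ t (u, v))
        + dot3 (D1 r (u, v)) (fun i => deriv (fun s => Shat r ρ t (u, s) i) v) := by
    have h := (hasDerivAt_dot3_snd hA hSd).deriv
    have h2 : deriv (fun s => Dus ρ (u, s)) v
        = deriv (fun s => dot3 (D1 r (u, s)) (Shat r ρ t (u, s))) v :=
      deriv_congr_snd hU hp (fun q hq => (hdus_eq q hq).trans (hphi q hq).symm)
    exact h2.trans h
  have E2 : Dus (Dvs ρ) (u, v)
      = dot3 (fun i => deriv (fun s => D2 r (s, v) i) u) (Shat r ρ t (u, v))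
        + dot3 (D2 r (u, v)) (fun i => deriv (fun s => Shat r ρ t (s, v) i) u) := by
    have h := (hasDerivAt_dot3_fst hB hSd).deriv
    have h2 : deriv (fun s => Dvs ρ (s, v)) u
        = deriv (fun s => dot3 (D2 r (s, v)) (Shat r ρ t (s, v))) u :=
      deriv_congr_fst hU hp (fun q hq => (hdvs_eq q hq).trans (hpsi q hq).symm)
    exact h2.trans h
  have E3 : Dus (Dus ρ) (u, v)
      = dot3 (fun i => deriv (fun s => D1 r (s, v) i) u) (Shat r ρ t (u, v))
        + dot3 (D1 r (u, v)) (fun i => deriv (fun s => Shat r ρ t (s, v) i) u) := by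
    have h := (hasDerivAt_dot3_fst hA hSd).deriv
    have h2 : deriv (fun s => Dus ρ (s, v)) u
        = deriv (fun s => dot3 (D1 r (s, v)) (Shat r ρ t (s, v))) u :=
      deriv_congr_fst hU hp (fun q hq => (hdus_eq q hq).trans (hphi q hq).symm)
    exact h2.trans h
  have E4 : Dvs (Dvs ρ) (u, v)
      = dot3 (fun i => deriv (fun s => D2 r (u, s) i) v) (Shat r ρ t (u, v))
        + dot3 (D2 r (u, v)) (fun i => deriv (fun s => Shat r ρ t (u, s) i) v) := by
    have h := (hasDerivAt_dot3_snd hB hSd).deriv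
    have h2 : deriv (fun s => Dvs ρ (u, s)) v
        = deriv (fun s => dot3 (D2 r (u, s)) (Shat r ρ t (u, s))) v :=
      deriv_congr_snd hU hp (fun q hq => (hdvs_eq q hq).trans (hpsi q hq).symm)
    exact h2.trans h
  -- Clairaut
  have hclv : (fun i => deriv (fun s => D1 r (u, s) i) v)
      = (fun i => deriv (fun s => D2 r (s, v) i) u) :=
    funext (clairaut_vec hU hsmooth hp)
  have hcls : Dvs (Dus ρ) (u, v) = Dus (Dvs ρ) (u, v) := by
    have h1 : Dvs (Dus ρ) (u, v) = deriv (fun s => d1 ρ (u, s)) v :=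
      deriv_congr_snd hU hp hdus_eq
    have h2 : Dus (Dvs ρ) (u, v) = deriv (fun s => d2 ρ (s, v)) u :=
      deriv_congr_fst hU hp hdvs_eq
    rw [h1, h2, clairaut_scal hU hρsmooth hp]
  have hAu : (fun i => deriv (fun s => D1 r (s, v) i) u) = Du (Du r) (u, v) := by
    funext i
    exact deriv_congr_fst hU hp (f := fun q => D1 r q i) (g := fun q => Du r q i)
      (fun q hq => (congrFun (hDu_eq q hq) i).symm)
  have hBv : (fun i => deriv (fun s => D2 r (u, s) i) v) = Dv (Dv r) (u, v) := by
    funext i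
    exact deriv_congr_snd hU hp (f := fun q => D2 r q i) (g := fun q => Dv r q i)
      (fun q hq => (congrFun (hDv_eq q hq) i).symm)
  have hP : (fun i => deriv (fun s => (bor r ρ (s, v) t).2 i) u)
      = (fun i => deriv (fun s => Shat r ρ t (s, v) i) u) := by
    funext i
    exact deriv_congr_fst hU hp (f := fun q => (bor r ρ q t).2 i)
      (g := fun q => Shat r ρ t q i) (fun q hq => congrFun (hSeq q hq) i)
  have hQ : (fun i => deriv (fun s => (bor r ρ (u, s) t).2 i) v)
      = (fun i => deriv (fun s => Shat r ρ t (u, s) i) v) := by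
    funext i
    exact deriv_congr_snd hU hp (f := fun q => (bor r ρ q t).2 i)
      (g := fun q => Shat r ρ t q i) (fun q hq => congrFun (hSeq q hq) i)
  -- the two key identities
  have hd : dot3 (fun i => deriv (fun s => D1 r (u, s) i) v) (Shat r ρ t (u, v))
      = dot3 (fun i => deriv (fun s => D2 r (s, v) i) u) (Shat r ρ t (u, v)) := by rw [hclv]
  have key1 : dot3 (D1 r (u, v)) (fun i => deriv (fun s => Shat r ρ t (u, s) i) v)
      - dot3 (D2 r (u, v)) (fun i => deriv (fun s => Shat r ρ t (s, v) i) u) = 0 := by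
    linarith [E1, E2, hcls, hd]
  have hsum : dot3 (fun i => deriv (fun s => D1 r (s, v) i) u) (Shat r ρ t (u, v))
      + dot3 (fun i => deriv (fun s => D2 r (u, s) i) v) (Shat r ρ t (u, v)) = 0 := by
    rw [hAu, hBv, ← dot3_add_left, hharm _ hp, dot3_zero_left]
  have key2 : dot3 (D1 r (u, v)) (fun i => deriv (fun s => Shat r ρ t (s, v) i) u)
      + dot3 (D2 r (u, v)) (fun i => deriv (fun s => Shat r ρ t (u, s) i) v) = 0 := by
    have h0 := hρharm _ hp
    linarith [E3, E4, hsum]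
  -- components of the three partial-derivative vectors
  have hX1 : (boru r ρ (u, v) t).1 = Du r (u, v) := rfl
  have hX2 : (boru r ρ (u, v) t).2
      = (fun i => deriv (fun s => (bor r ρ (s, v) t).2 i) u) := rfl
  have hY1 : (borv r ρ (u, v) t).1 = Dv r (u, v) := rfl
  have hY2 : (borv r ρ (u, v) t).2
      = (fun i => deriv (fun s => (bor r ρ (u, s) t).2 i) v) := rfl
  have hZ1 : (bort r ρ (u, v) t).1 = (fun _ => (0:ℝ)) := by
    funext i
    exact deriv_const t _
  have hZ2 : (bort r ρ (u, v) t).2 = nvec r (u, v) := by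
    funext i
    have h : HasDerivAt (fun s : ℝ =>
        (crossProduct (tanvec r ρ (u, v)) (nvec r (u, v))) i + s * (nvec r (u, v) i))
        (nvec r (u, v) i) t := by
      simpa using ((hasDerivAt_id t).mul_const (nvec r (u, v) i)).const_add
        ((crossProduct (tanvec r ρ (u, v)) (nvec r (u, v))) i)
    exact h.deriv
  have hDup := hDu_eq _ hp
  have hDvp := hDv_eq _ hp
  have key1' : dot3 (Du r (u, v)) ((borv r ρ (u, v) t).2)
      - dot3 (Dv r (u, v)) ((boru r ρ (u, v) t).2) = 0 := by
    rw [hX2, hY2, hP, hQ, hDup, hDvp]; exact key1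
  -- symplectic form computations
  have s_anti : ∀ X Y : (Fin 3 → ℝ) × (Fin 3 → ℝ), symp X Y = - symp Y X := by
    intro X Y; unfold symp; ring
  have s_self : ∀ X : (Fin 3 → ℝ) × (Fin 3 → ℝ), symp X X = 0 := by
    intro X; unfold symp; ring
  have s_uv : symp (boru r ρ (u, v) t) (borv r ρ (u, v) t) = 0 := by
    show dot3 (boru r ρ (u, v) t).1 (borv r ρ (u, v) t).2
      - dot3 (borv r ρ (u, v) t).1 (boru r ρ (u, v) t).2 = 0
    rw [hX1, hY1]; exact key1'
  have hnil : ∀ w : Fin 3 → ℝ, dot3 (bort r ρ (u, v) t).1 w = 0 := by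
    intro w; rw [hZ1]; exact dot3_zero_left' w
  have s_ut : symp (boru r ρ (u, v) t) (bort r ρ (u, v) t) = 0 := by
    show dot3 (boru r ρ (u, v) t).1 (bort r ρ (u, v) t).2
      - dot3 (bort r ρ (u, v) t).1 (boru r ρ (u, v) t).2 = 0
    rw [hX1, hZ2, hnil]
    simp only [nvec]
    rw [dot3_smul_right, dot3_cross_left, mul_zero, sub_zero]
  have s_vt : symp (borv r ρ (u, v) t) (bort r ρ (u, v) t) = 0 := by
    show dot3 (borv r ρ (u, v) t).1 (bort r ρ (u, v) t).2
      - dot3 (bort r ρ (u, v) t).1 (borv r ρ (u, v) t).2 = 0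
    rw [hY1, hZ2, hnil]
    simp only [nvec]
    rw [dot3_smul_right, dot3_cross_right, mul_zero, sub_zero]
  refine ⟨?_, ?_⟩
  · intro X hX Y hY
    simp only [Set.mem_insert_iff, Set.mem_singleton_iff] at hX hY
    rcases hX with rfl | rfl | rfl <;> rcases hY with rfl | rfl | rfl
    · exact s_self _
    · exact s_uv
    · exact s_ut
    · rw [s_anti]; rw [s_uv]; ring
    · exact s_self _
    · exact s_vt
    · rw [s_anti]; rw [s_ut]; ring
    · rw [s_anti]; rw [s_vt]; ring
    · exact s_self _
  · rw [detre, hZ1, hZ2, hX1, hX2, hY1, hY2, hP, hQ, hDup, hDvp]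
    rw [dot3_zero_left', dot3_zero_left']
    simp only [nvec]
    rw [hnrm _ hp, hDup, hDvp]
    rw [dot3_smul_left, dot3_smul_left, dot3_cross_cross', dot3_cross_cross']
    have hcBA : dot3 (D2 r (u, v)) (D1 r (u, v)) = 0 := by
      rw [dot3_comm']; exact hcAB _ hp
    rw [hcAB _ hp, hcBB _ hp, hcBA]
    have hk : dot3 (D1 r (u, v)) (fun i => deriv (fun s => Shat r ρ t (s, v) i) u)
        = - dot3 (D2 r (u, v)) (fun i => deriv (fun s => Shat r ρ t (u, s) i) v) := by
      linarith [key2]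
    rw [hk]
    ring
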